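/- arXiv:math/0301325 — 2 statements merged into one kernel-verified Lean document; each statement's English description precedes it below -/
import Mathlib

section
/- Every finite almost perfect group is perfect: if G is a finite group such that every endomorphism of G factoring through a commutative group is trivial, then the commutator subgroup of G equals G. -/
/-!
If `G` is not perfect, its abelianization is a nontrivial finite abelian group, so dividing out a
maximal subgroup gives a surjection `f` of `G` onto a cyclic group `Q` of prime order `p`.
By Cauchy's theorem `G` has an element of order `p`, i.e. an embedding `g : Q → G`, and then
`g ∘ f` is a nontrivial endomorphism of `G` factoring through the commutative group `Q`.
-/

universe u

theorem QuotientGroup.isSimpleGroup_of_isCoatom {C : Type*} [CommGroup C] {M : Subgroup C}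
    (hM : IsCoatom M) : IsSimpleGroup (C ⧸ M) := by
  have : IsSimpleOrder (Subgroup (C ⧸ M)) :=
    (OrderIso.isSimpleOrder_iff (β := Set.Ici M) (QuotientGroup.comapMk'OrderIso M)).mpr
      (Set.isSimpleOrder_Ici_iff_isCoatom.mpr hM)
  have : Nontrivial (C ⧸ M) := Subgroup.nontrivial_iff.mp inferInstance
  exact ⟨fun H _ => IsSimpleOrder.eq_bot_or_eq_top H⟩

theorem CommGroup.exists_prime_card_quotient (C : Type*) [CommGroup C] [Finite C]
    [Nontrivial C] :
    ∃ M : Subgroup C, (Nat.card (C ⧸ M)).Prime := by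
  obtain ⟨M, hM⟩ := IsCoatomic.exists_coatom (α := Subgroup C)
  have := QuotientGroup.isSimpleGroup_of_isCoatom hM
  exact ⟨M, IsSimpleGroup.prime_card⟩

theorem exists_injective_monoidHom_of_prime_card_dvd {G Q : Type*} [Group G] [Finite G] [Group Q]
    (hQ : (Nat.card Q).Prime) (hdvd : Nat.card Q ∣ Nat.card G) :
    ∃ g : Q →* G, Function.Injective g := by
  have := Fact.mk hQ
  obtain ⟨y, hy⟩ := exists_prime_orderOf_dvd_card' _ hdvd
  let e : Q ≃* Subgroup.zpowers y := mulEquivOfPrimeCardEq rfl (Nat.card_zpowers y ▸ hy)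
  exact ⟨(Subgroup.zpowers y).subtype.comp e.toMonoidHom, Subtype.val_injective.comp e.injective⟩

theorem MonoidHom.comp_ne_one_of_surjective_of_injective {G Q H : Type*} [MulOneClass G]
    [MulOneClass Q] [Nontrivial Q] [MulOneClass H] {f : G →* Q} {g : Q →* H}
    (hf : Function.Surjective f) (hg : Function.Injective g) : g.comp f ≠ 1 := by
  obtain ⟨q, hq⟩ := exists_ne (1 : Q)
  obtain ⟨x, rfl⟩ := hf q
  intro h
  exact hq (hg (by simpa using DFunLike.congr_fun h x))

/-- Every finite almost perfect group is perfect: if every endomorphism of a finite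
group `G` factoring through a commutative group is trivial, then `G` is perfect. -/
theorem perfect_of_finite_almost_perfect
    {G : Type u} [Group G] [Finite G]
    (hap : ∀ (A : Type u) [CommGroup A] (f : G →* A) (g : A →* G), g.comp f = 1) :
    commutator G = ⊤ := by
  by_contra hG
  have : Nontrivial (Abelianization G) := by
    rwa [← not_subsingleton_iff_nontrivial, Abelianization, QuotientGroup.subsingleton_iff]
  obtain ⟨M, hM⟩ := CommGroup.exists_prime_card_quotient (Abelianization G)
  have : Nontrivial (Abelianization G ⧸ M) := Finite.one_lt_card_iff_nontrivial.mp hM.one_lt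
  let f : G →* Abelianization G ⧸ M := (QuotientGroup.mk' M).comp Abelianization.of
  have hf : Function.Surjective f :=
    (QuotientGroup.mk'_surjective M).comp (QuotientGroup.mk'_surjective _)
  obtain ⟨g, hg⟩ :=
    exists_injective_monoidHom_of_prime_card_dvd hM (Subgroup.card_dvd_of_surjective f hf)
  exact MonoidHom.comp_ne_one_of_surjective_of_injective hf hg (hap _ f g)
end

section
/- Let φ : F_n → F_{2n} be the homomorphism between free groups sending the i-th generator x_i to the commutator [x_{2i}, x_{2i+1}] (0 ≤ i < n), and let p be a prime. If w ∈ F_n has no p-th root in F_n (there is no y ∈ F_n with y^p = w), then φ(w) has no p-th root in F_{2n}. -/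
open scoped commutatorElement

/-- The homomorphism `F_n → F_{2n}` sending the `i`-th generator `xᵢ` to the
commutator `⁅x_{2i}, x_{2i+1}⁆`. -/
noncomputable def phi (n : ℕ) : FreeGroup (Fin n) →* FreeGroup (Fin (2 * n)) :=
  FreeGroup.lift fun i =>
    ⁅FreeGroup.of (⟨2 * (i : ℕ), by have := i.isLt; omega⟩ : Fin (2 * n)),
     FreeGroup.of (⟨2 * (i : ℕ) + 1, by have := i.isLt; omega⟩ : Fin (2 * n))⁆

/-!
The reduced word of `φ w` is obtained from that of `w` by replacing each letter by a block of four
letters, with exponent signs `+ + - -`. Conjugating, we may assume `w` cyclically reduced; then so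
is `φ w`, hence so is any `p`-th root `y`, and the reduced word of `φ w` is that of `y`, `r`,
repeated `p` times. Since the signs of `φ w` repeat with period exactly four, `4 ∣ |r|`, so the
prefix `r` of `φ w` is a union of blocks, i.e. `y = φ z`. Injectivity of `φ` gives `z ^ p = w`.
-/

open List FreeGroup

theorem FreeGroup.isCyclicallyReduced_toWord_of_pow {α : Type*} [DecidableEq α]
    {x : FreeGroup α} {p : ℕ} (hp : p ≠ 0) (h : IsCyclicallyReduced (x ^ p).toWord) :
    IsCyclicallyReduced x.toWord := by
  rw [toWord_pow, reduceCyclically.reduce_flatten_replicate isReduced_toWord, if_neg hp] at h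
  have hx := reduceCyclically.conj_conjugator_reduceCyclically x.toWord
  rcases hc : reduceCyclically.conjugator x.toWord with _ | ⟨a, c⟩
  · simp only [hc, nil_append, invRev_empty, append_nil] at hx
    rw [← hx]
    exact reduceCyclically.isCyclicallyReduced isReduced_toWord
  · -- the word of `x ^ p` would begin with `a` and end with `a⁻¹`
    rw [hc] at h
    refine absurd (h.2 (a.1, !a.2) ?_ a (by simp) rfl) (by simp)
    rw [getLast?_append_of_ne_nil _ (by simp [invRev])]
    simp [invRev]

section

variable {n : ℕ}

def phiGen (i : Fin n) (e : Bool) : Fin (2 * n) :=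
  ⟨2 * i + if e then 0 else 1, by have := i.isLt; split <;> omega⟩

theorem phiGen_inj {i j : Fin n} {e f : Bool} : phiGen i e = phiGen j f ↔ i = j ∧ e = f := by
  simp only [phiGen, Fin.ext_iff]
  cases e <;> cases f <;> simp <;> omega

/-- With `a = x_{2i} = phiGen i true` and `b = x_{2i+1} = phiGen i false`, the word
`phiBlock (i, true)` is `a b a⁻¹ b⁻¹`, the reduced word of `⁅a, b⁆ = φ xᵢ`, and
`phiBlock (i, false)` is `b a b⁻¹ a⁻¹`, that of `⁅b, a⁆ = φ xᵢ⁻¹`. -/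
def phiBlock (x : Fin n × Bool) : List (Fin (2 * n) × Bool) :=
  [(phiGen x.1 x.2, true), (phiGen x.1 !x.2, true), (phiGen x.1 x.2, false),
    (phiGen x.1 !x.2, false)]

def phiWord (L : List (Fin n × Bool)) : List (Fin (2 * n) × Bool) :=
  L.flatMap phiBlock

theorem phiWord_cons (x : Fin n × Bool) (L : List (Fin n × Bool)) :
    phiWord (x :: L) = phiBlock x ++ phiWord L :=
  flatMap_cons

@[simp] theorem length_phiWord (L : List (Fin n × Bool)) :
    (phiWord L).length = 4 * L.length := by
  simp [phiWord, phiBlock, length_flatMap, mul_comm]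

theorem head?_phiWord (L : List (Fin n × Bool)) :
    (phiWord L).head? = L.head?.map fun x => (phiGen x.1 x.2, true) := by
  cases L <;> simp [phiWord, phiBlock]

theorem getLast?_phiWord (L : List (Fin n × Bool)) :
    (phiWord L).getLast? = L.getLast?.map fun x => (phiGen x.1 !x.2, false) := by
  induction L using List.reverseRecOn <;> simp [phiWord, phiBlock]

theorem mk_phiBlock (x : Fin n × Bool) : mk (phiBlock x) = phi n (mk [x]) := by
  have hcomm (u v : Fin (2 * n)) :
      mk [(u, true), (v, true), (u, false), (v, false)] = ⁅of u, of v⁆ := by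
    simp [commutatorElement_def, of, inv_mk, invRev, mul_mk]
  obtain ⟨i, _ | _⟩ := x <;> simp [phiBlock, hcomm, phi] <;> rfl

theorem mk_phiWord (L : List (Fin n × Bool)) : mk (phiWord L) = phi n (mk L) := by
  induction L with
  | nil => rfl
  | cons x L ih =>
    rw [phiWord_cons, ← mul_mk, ih, mk_phiBlock, ← _root_.map_mul, mul_mk, singleton_append]

theorem FreeGroup.IsReduced.phiWord {L : List (Fin n × Bool)} (h : IsReduced L) :
    IsReduced (phiWord L) := by
  rw [FreeGroup.IsReduced, _root_.phiWord, flatMap_def, isChain_flatten (by simp [phiBlock]),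
    isChain_map]
  refine ⟨?_, h.imp ?_⟩
  · simp only [mem_map]
    rintro _ ⟨x, -, rfl⟩
    simp [phiBlock, phiGen_inj]
  · simp [phiBlock, phiGen_inj]

theorem FreeGroup.IsCyclicallyReduced.phiWord {L : List (Fin n × Bool)}
    (h : IsCyclicallyReduced L) : IsCyclicallyReduced (phiWord L) := by
  refine ⟨h.isReduced.phiWord, ?_⟩
  simp only [getLast?_phiWord, head?_phiWord, Option.mem_map]
  rintro _ ⟨x, hx, rfl⟩ _ ⟨y, hy, rfl⟩ hxy
  obtain ⟨h₁, h₂⟩ := phiGen_inj.1 hxy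
  simpa [← h₂] using h.2 x hx y hy h₁

theorem toWord_phi (w : FreeGroup (Fin n)) : (phi n w).toWord = phiWord w.toWord := by
  calc (phi n w).toWord = (mk (phiWord w.toWord)).toWord := by rw [mk_phiWord, mk_toWord]
    _ = phiWord w.toWord := by rw [toWord_mk, isReduced_toWord.phiWord.reduce_eq]

theorem phiWord_injective : Function.Injective (phiWord (n := n)) := by
  intro L L' h
  induction L generalizing L' with
  | nil => simpa [eq_comm] using congrArg length h
  | cons x L ih =>
    cases L' with
    | nil => simpa using congrArg length h
    | cons y L' =>
      rw [phiWord_cons, phiWord_cons] at h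
      obtain ⟨hxy, hL⟩ := append_inj h (by simp [phiBlock])
      simp only [phiBlock, cons.injEq, Prod.mk.injEq, phiGen_inj] at hxy
      rw [Prod.ext hxy.1.1.1 hxy.1.1.2, ih hL]

theorem phi_injective : Function.Injective (phi n) := fun a b h => by
  have := congrArg toWord h
  rw [toWord_phi, toWord_phi] at this
  exact toWord_injective (phiWord_injective this)

theorem snd_getElem_phiWord (L : List (Fin n × Bool)) (m : ℕ) (h : m < (phiWord L).length) :
    (phiWord L)[m].2 = decide (m % 4 < 2) := by
  induction L generalizing m with
  | nil => simp at h
  | cons x L ih =>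
    simp only [phiWord_cons, getElem_append]
    split
    · have hm : m < 4 := by simpa [phiBlock] using ‹m < (phiBlock x).length›
      interval_cases m <;> rfl
    · have hm : 4 ≤ m := by simpa [phiBlock] using ‹¬m < (phiBlock x).length›
      rw [ih, show (phiBlock x).length = 4 from rfl, ← Nat.mod_eq_sub_mod hm]

theorem take_phiWord (L : List (Fin n × Bool)) (q : ℕ) :
    (phiWord L).take (4 * q) = phiWord (L.take q) := by
  induction L generalizing q with
  | nil => simp [phiWord]
  | cons x L ih =>
    cases q with
    | zero => simp [phiWord]
    | succ q =>
      rw [take_succ_cons, phiWord_cons, phiWord_cons, ← ih, mul_add, mul_one, add_comm,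
        show 4 = (phiBlock x).length from rfl, take_length_add_append]

/- For `p ≥ 2`, `phiWord L = r ++ T = T ++ r`, so the signs of `phiWord L` are invariant under
a shift by `|r|`; comparing the first two positions with the pattern `+ + - -` gives `4 ∣ |r|`. -/
theorem four_dvd_length_of_flatten_replicate_eq_phiWord {r : List (Fin (2 * n) × Bool)}
    {p : ℕ} {L : List (Fin n × Bool)} (hp : p ≠ 0) (h : (replicate p r).flatten = phiWord L) :
    4 ∣ r.length := by
  obtain ⟨k, rfl⟩ := Nat.exists_eq_add_one_of_ne_zero hp
  rcases k with _ | k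
  · rw [replicate_one, flatten_singleton] at h
    simp [h]
  set T := (replicate (k + 1) r).flatten
  have hrT : r ++ T = phiWord L := by rw [← h, replicate_succ, flatten_cons]
  have hTr : T ++ r = phiWord L := by
    rw [← h, replicate_succ', flatten_append, flatten_singleton]
  have hT : r.length ≤ T.length := by simp [T, replicate_succ]
  have hlen : (phiWord L).length = r.length + T.length := by rw [← hrT, length_append]
  have hsign (m : ℕ) (hm : m < T.length) :
      decide ((r.length + m) % 4 < 2) = decide (m % 4 < 2) := by
    have e₁ := getElem_of_eq hrT (i := r.length + m) (by simp; omega)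
    have e₂ := getElem_of_eq hTr (i := m) (by simp; omega)
    rw [getElem_append_right (by omega)] at e₁
    rw [getElem_append_left hm] at e₂
    simp only [Nat.add_sub_cancel_left] at e₁
    rw [← snd_getElem_phiWord L _ (by omega), ← snd_getElem_phiWord L _ (by omega), ← e₁, ← e₂]
  rcases Nat.eq_zero_or_pos r.length with hr | hr
  · simp [hr]
  have h₀ := hsign 0 (by omega)
  have h₁ := hsign 1 (by simp only [length_phiWord] at hlen; omega)
  simp only [decide_eq_decide] at h₀ h₁
  omega

variable {p : ℕ} {w : FreeGroup (Fin n)} {y : FreeGroup (Fin (2 * n))}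

theorem mem_range_phi_of_pow_eq_of_isCyclicallyReduced (hp : p ≠ 0)
    (hw : IsCyclicallyReduced w.toWord) (h : y ^ p = phi n w) : y ∈ (phi n).range := by
  have hy : IsCyclicallyReduced y.toWord :=
    isCyclicallyReduced_toWord_of_pow hp (by rw [h, toWord_phi]; exact hw.phiWord)
  have hpow : (replicate p y.toWord).flatten = phiWord w.toWord := by
    rw [← toWord_phi, ← h, toWord_pow, (hy.flatten_replicate p).isReduced.reduce_eq]
  obtain ⟨q, hq⟩ := four_dvd_length_of_flatten_replicate_eq_phiWord hp hpow
  refine ⟨mk (w.toWord.take q), ?_⟩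
  obtain ⟨k, rfl⟩ := Nat.exists_eq_add_one_of_ne_zero hp
  rw [← mk_phiWord, ← take_phiWord, ← hpow, ← hq, replicate_succ, flatten_cons, take_left,
    mk_toWord]

theorem mem_range_phi_of_pow_eq (hp : p ≠ 0) (h : y ^ p = phi n w) : y ∈ (phi n).range := by
  set c := reduceCyclically.conjugator w.toWord
  set r := reduceCyclically w.toWord
  have hw : w = mk c * mk r * (mk c)⁻¹ := by
    rw [inv_mk, mul_mk, mul_mk, reduceCyclically.conj_conjugator_reduceCyclically, mk_toWord]
  have hr : IsCyclicallyReduced (mk r).toWord := by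
    have := reduceCyclically.isCyclicallyReduced (isReduced_toWord (x := w))
    rwa [toWord_mk, this.isReduced.reduce_eq]
  obtain ⟨z, hz⟩ := mem_range_phi_of_pow_eq_of_isCyclicallyReduced hp hr
    (y := (MulAut.conj (phi n (mk c)))⁻¹ y) (by
      rw [← _root_.map_pow, h, hw, MulAut.conj_inv_apply]
      simp only [_root_.map_mul, _root_.map_inv]
      group)
  refine ⟨mk c * z * (mk c)⁻¹, ?_⟩
  rw [_root_.map_mul, _root_.map_mul, _root_.map_inv, hz, MulAut.conj_inv_apply]
  group

end

/-- If `w` has no `p`-th root in `F_n`, then `φ w` has no `p`-th root in `F_{2n}`. -/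
theorem no_p_root_image (n : ℕ) (p : ℕ) (hp : p.Prime) (w : FreeGroup (Fin n))
    (hw : ¬∃ y : FreeGroup (Fin n), y ^ p = w) :
    ¬∃ y : FreeGroup (Fin (2 * n)), y ^ p = phi n w := by
  rintro ⟨y, hy⟩
  obtain ⟨z, rfl⟩ := mem_range_phi_of_pow_eq hp.ne_zero hy
  exact hw ⟨z, phi_injective (by rw [map_pow, hy])⟩
end
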